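/- arXiv:0805.1583 — 3 statements merged into one kernel-verified Lean document; each statement's English description precedes it below -/
import Mathlib

section
/- If L₀ is a maximal invariant linked system on a group G, then the set ↑L₀ = {L ∈ λ(G) : L ⊇ L₀} is a left ideal of the semigroup λ(G): for all maximal linked systems A, B with L₀ ⊆ B, L₀ ⊆ A * B. -/
/-! Invariance of `L₀` puts every left translate `x⁻¹S` of a set `S ∈ L₀` into `L₀ ⊆ B`, so the
set `{x | x⁻¹S ∈ B}` is all of `G`, and `univ` lies in every maximal linked system. -/

def Linked {X : Type*} (L : Set (Set X)) : Prop :=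
  ∀ A ∈ L, ∀ B ∈ L, (A ∩ B).Nonempty

def MaxLinked {X : Type*} (L : Set (Set X)) : Prop :=
  Linked L ∧ ∀ L' : Set (Set X), Linked L' → L ⊆ L' → L' = L

def perp {X : Type*} (L : Set (Set X)) : Set (Set X) :=
  {A | ∀ F ∈ L, (A ∩ F).Nonempty}

def conv {G : Type*} [Group G] (A B : Set (Set G)) : Set (Set G) :=
  {S | {x : G | {z : G | x * z ∈ S} ∈ B} ∈ A}

def Invariant {G : Type*} [Group G] (L : Set (Set G)) : Prop :=
  ∀ x : G, (fun A => (fun a => x * a) '' A) '' L = L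

def MaxInvLinked {G : Type*} [Group G] (L : Set (Set G)) : Prop :=
  Linked L ∧ Invariant L ∧
    ∀ L' : Set (Set G), Linked L' → Invariant L' → L ⊆ L' → L' = L

theorem Linked.insert_univ {X : Type*} [Nonempty X] {L : Set (Set X)} (hL : Linked L) :
    Linked (insert Set.univ L) := by
  rintro P (rfl | hP) Q (rfl | hQ)
  · simp
  · simpa using hL Q hQ Q hQ
  · simpa using hL P hP P hP
  · exact hL P hP Q hQ

theorem MaxLinked.univ_mem {X : Type*} [Nonempty X] {L : Set (Set X)} (hL : MaxLinked L) :
    Set.univ ∈ L := by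
  rw [← hL.2 _ hL.1.insert_univ (Set.subset_insert _ _)]
  exact Set.mem_insert _ _

theorem Invariant.preimage_mul_left_mem {G : Type*} [Group G] {L : Set (Set G)}
    (hL : Invariant L) {S : Set G} (hS : S ∈ L) (x : G) : {z | x * z ∈ S} ∈ L := by
  have htranslate : (fun a => x⁻¹ * a) '' S ∈ L := hL x⁻¹ ▸ Set.mem_image_of_mem _ hS
  convert htranslate using 1
  ext z
  simp

theorem up_maxInv_left_ideal {G : Type*} [Group G] {L₀ : Set (Set G)}
    (hL₀ : MaxInvLinked L₀) :
    ∀ A B : Set (Set G), MaxLinked A → MaxLinked B → L₀ ⊆ B → L₀ ⊆ conv A B := by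
  intro A B hA _ hL₀B S hS
  have hall : {x : G | {z : G | x * z ∈ S} ∈ B} = Set.univ :=
    Set.eq_univ_of_forall fun x => hL₀B (hL₀.2.1.preimage_mul_left_mem hS x)
  show {x : G | {z : G | x * z ∈ S} ∈ B} ∈ A
  rw [hall]
  exact hA.univ_mem
end

section
/- Let L₀ be a maximal invariant linked system on an abelian group G, and let A ∈ L₀⊥ \ L₀. Then there exists x ∈ G such that xA = G \ A, and consequently x²A = A. -/
/-!
Adding to `L₀` all translates of a set `S ∈ L₀⊥` with `S ∩ xS ≠ ∅` for every `x` keeps the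
system linked and invariant, so by maximality `S ∈ L₀`. Hence `A` has a translate `xA ⊆ Aᶜ`.
The same maximality argument shows that `L₀` is upward closed, so `Aᶜ ∈ L₀⊥ \ L₀` as well, and
some translate satisfies `gAᶜ ⊆ A`. In an abelian group the two inclusions combine to
`Aᶜ ⊆ gA ⊆ xA ⊆ Aᶜ`.
-/

open Pointwise

section Translates

variable {G : Type*} [Group G]

theorem Set.smul_set_inter_nonempty_iff {a : G} {s t : Set G} :
    (a • s ∩ t).Nonempty ↔ (s ∩ a⁻¹ • t).Nonempty := by
  rw [← Set.smul_set_nonempty (a := a⁻¹), Set.smul_set_inter, inv_smul_smul]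

theorem Set.smul_sq_eq_of_smul_eq_compl {x : G} {A : Set G} (h : x • A = Aᶜ) :
    x ^ 2 • A = A := by
  rw [pow_two, mul_smul, h, Set.smul_set_compl, h, compl_compl]

theorem invariant_iff {L : Set (Set G)} : Invariant L ↔ ∀ x : G, ∀ F ∈ L, x • F ∈ L := by
  refine ⟨fun hL x F hF => hL x ▸ ⟨F, hF, rfl⟩, fun h x => ?_⟩
  refine (Set.image_subset_iff.mpr fun F hF => h x F hF).antisymm fun F hF => ?_
  exact ⟨x⁻¹ • F, h _ F hF, smul_inv_smul x F⟩

theorem Invariant.smul_mem {L : Set (Set G)} (hL : Invariant L) (x : G) {F : Set G}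
    (hF : F ∈ L) : x • F ∈ L :=
  invariant_iff.mp hL x F hF

theorem Invariant.union_range_smul {L : Set (Set G)} (hL : Invariant L) (S : Set G) :
    Invariant (L ∪ Set.range fun g : G => g • S) := by
  refine invariant_iff.mpr fun x F hF => ?_
  rcases hF with hF | ⟨g, rfl⟩
  · exact Or.inl (hL.smul_mem x hF)
  · exact Or.inr ⟨x * g, (smul_smul x g S).symm⟩

theorem Linked.union_range_smul {L : Set (Set G)} (hL : Linked L) (hinv : Invariant L)
    {S : Set G} (hS : S ∈ perp L) (hSS : ∀ x : G, (S ∩ x • S).Nonempty) :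
    Linked (L ∪ Set.range fun g : G => g • S) := by
  rintro B (hB | ⟨g, rfl⟩) C (hC | ⟨h, rfl⟩)
  · exact hL B hB C hC
  · rw [Set.inter_comm, Set.smul_set_inter_nonempty_iff]
    exact hS _ (hinv.smul_mem _ hB)
  · rw [Set.smul_set_inter_nonempty_iff]
    exact hS _ (hinv.smul_mem _ hC)
  · rw [Set.smul_set_inter_nonempty_iff, smul_smul]
    exact hSS _

namespace MaxInvLinked

variable {L : Set (Set G)}

theorem mem_of_mem_perp (hL : MaxInvLinked L) {S : Set G} (hS : S ∈ perp L)
    (hSS : ∀ x : G, (S ∩ x • S).Nonempty) : S ∈ L := by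
  obtain ⟨hlinked, hinv, hmax⟩ := hL
  rw [← hmax _ (hlinked.union_range_smul hinv hS hSS) (hinv.union_range_smul S)
    Set.subset_union_left]
  exact Or.inr ⟨1, one_smul G S⟩

theorem exists_disjoint_smul (hL : MaxInvLinked L) {S : Set G} (hS : S ∈ perp L \ L) :
    ∃ x : G, Disjoint (x • S) S := by
  by_contra! h
  refine hS.2 (hL.mem_of_mem_perp hS.1 fun x => ?_)
  rw [Set.inter_comm]
  exact Set.not_disjoint_iff_nonempty_inter.mp (h x)

theorem mem_of_subset (hL : MaxInvLinked L) {F S : Set G} (hF : F ∈ L) (hFS : F ⊆ S) :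
    S ∈ L :=
  hL.mem_of_mem_perp (fun B hB => (hL.1 F hF B hB).mono (Set.inter_subset_inter_left B hFS))
    fun x => (hL.1 F hF _ (hL.2.1.smul_mem x hF)).mono
      (Set.inter_subset_inter hFS (Set.smul_set_mono hFS))

theorem compl_mem_perp_diff (hL : MaxInvLinked L) {A : Set G} (hA : A ∈ perp L \ L) :
    Aᶜ ∈ perp L \ L := by
  refine ⟨fun F hF => ?_, fun hAc => ?_⟩
  · by_contra hdisj
    rw [← Set.not_disjoint_iff_nonempty_inter, not_not, disjoint_compl_left_iff] at hdisj
    exact hA.2 (hL.mem_of_subset hF hdisj)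
  · obtain ⟨a, haA, haAc⟩ := hA.1 _ hAc
    exact haAc haA

end MaxInvLinked

end Translates

theorem Set.smul_eq_compl_of_disjoint {G : Type*} [CommGroup G] {x g : G} {A : Set G}
    (hx : Disjoint (x • A) A) (hg : Disjoint (g • Aᶜ) Aᶜ) : x • A = Aᶜ := by
  have hxA : x • A ⊆ Aᶜ := Set.subset_compl_iff_disjoint_right.mpr hx
  have hgA : g • Aᶜ ⊆ A := Set.disjoint_compl_right_iff_subset.mp hg
  have hAg : Aᶜ ⊆ g • A := by
    rwa [Set.smul_set_compl, compl_subset_comm] at hgA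
  have hgx : g • A ⊆ x • A := by
    have hx' : x⁻¹ • A ⊆ Aᶜ := by
      rw [← Set.disjoint_smul_set (a := x⁻¹), inv_smul_smul, disjoint_comm] at hx
      exact Set.subset_compl_iff_disjoint_right.mpr hx
    have hg' : Aᶜ ⊆ g⁻¹ • A := Set.smul_set_subset_iff_subset_inv_smul_set.mp hgA
    have := Set.smul_set_mono (a := g * x) (hx'.trans hg')
    rwa [smul_smul, smul_smul, mul_inv_cancel_right, mul_comm g x, mul_inv_cancel_right] at this
  exact hxA.antisymm (hAg.trans hgx)

theorem perp_diff_shift {G : Type*} [CommGroup G] {L₀ : Set (Set G)}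
    (hL₀ : MaxInvLinked L₀) {A : Set G} (hA : A ∈ perp L₀ \ L₀) :
    ∃ x : G, (fun a => x * a) '' A = Aᶜ ∧ (fun a => x ^ 2 * a) '' A = A := by
  obtain ⟨x, hx⟩ := hL₀.exists_disjoint_smul hA
  obtain ⟨g, hg⟩ := hL₀.exists_disjoint_smul (hL₀.compl_mem_perp_diff hA)
  have hxA : x • A = Aᶜ := Set.smul_eq_compl_of_disjoint hx hg
  exact ⟨x, hxA, Set.smul_sq_eq_of_smul_eq_compl hxA⟩
end

section
/- If H is a normal subgroup of a group G such that every element of H has odd order, then the induced homomorphism λπ : λ(G) → λ(G/H) is injective on each minimal left ideal of λ(G), where G is finite (so λ(G) is a finite semigroup). -/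
def IsLeftIdealLam {G : Type*} [Group G] (I : Set (Set (Set G))) : Prop :=
  I.Nonempty ∧ (∀ B ∈ I, MaxLinked B) ∧
    ∀ A : Set (Set G), MaxLinked A → ∀ B ∈ I, conv A B ∈ I

def IsMinimalLeftIdealLam {G : Type*} [Group G] (I : Set (Set (Set G))) : Prop :=
  IsLeftIdealLam I ∧ ∀ J : Set (Set (Set G)), IsLeftIdealLam J → J ⊆ I → J = I

/-!
Since every element of `H` has odd order, `|H|` is odd (Cauchy), so the sets containing more
than half of `H` form a maximal linked system `majority H`. A set `S` lies in `L * majority H`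
exactly when the set of cosets in which `S` has a majority lies in `λπ(L)`; hence
`λπ(L * majority H) = λπ(L)` and `λπ` is injective on the left ideal `λ(G) * majority H`.
In a finite semigroup a homomorphism injective on one left ideal `J` is injective on every
minimal left ideal `I`: for an idempotent `e ∈ I` and an idempotent `u ∈ J` with `e * u = u`,
the idempotent `u * e` of `I` is a right identity on `I`, so `q ↦ q * u` maps `I` injectively
into `J`.
-/

open Set

namespace MaxLinked

variable {X : Type*} {L : Set (Set X)}

theorem mem_of_linked_insert (hL : MaxLinked L) {A : Set X} (hA : Linked (insert A L)) :
    A ∈ L :=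
  hL.2 _ hA (subset_insert A L) ▸ mem_insert A L

theorem linked_insert (hL : Linked L) {A : Set X} (hA : A.Nonempty)
    (hAL : ∀ F ∈ L, (A ∩ F).Nonempty) : Linked (insert A L) := by
  rintro B (rfl | hB) C (rfl | hC)
  · simpa using hA
  · exact hAL C hC
  · exact inter_comm B _ ▸ hAL B hB
  · exact hL B hB C hC

theorem univ_mem_s18 [Nonempty X] (hL : MaxLinked L) : univ ∈ L :=
  hL.mem_of_linked_insert <| linked_insert hL.1 univ_nonempty fun F hF => by
    simpa using hL.1 F hF F hF

theorem mem_of_forall_inter_nonempty [Nonempty X] (hL : MaxLinked L) {A : Set X}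
    (hAL : ∀ F ∈ L, (A ∩ F).Nonempty) : A ∈ L :=
  hL.mem_of_linked_insert <| linked_insert hL.1 (by simpa using hAL univ hL.univ_mem_s18) hAL

theorem mem_or_compl_mem [Nonempty X] (hL : MaxLinked L) (A : Set X) : A ∈ L ∨ Aᶜ ∈ L := by
  by_contra! ⟨hA, hAc⟩
  obtain ⟨F, hF, hAF⟩ : ∃ F ∈ L, ¬(A ∩ F).Nonempty := by
    by_contra! h
    exact hA (hL.mem_of_forall_inter_nonempty h)
  obtain ⟨F', hF', hAF'⟩ : ∃ F ∈ L, ¬(Aᶜ ∩ F).Nonempty := by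
    by_contra! h
    exact hAc (hL.mem_of_forall_inter_nonempty h)
  obtain ⟨x, hxF, hxF'⟩ := hL.1 F hF F' hF'
  by_cases hxA : x ∈ A
  · exact hAF ⟨x, hxA, hxF⟩
  · exact hAF' ⟨x, hxA, hxF'⟩

theorem compl_mem_iff [Nonempty X] (hL : MaxLinked L) {A : Set X} : Aᶜ ∈ L ↔ A ∉ L := by
  refine ⟨fun hAc hA => ?_, (hL.mem_or_compl_mem A).resolve_left⟩
  obtain ⟨x, hxA, hxAc⟩ := hL.1 A hA _ hAc
  exact hxAc hxA

theorem of_mem_or_compl_mem (hL : Linked L) (hcompl : ∀ A, A ∈ L ∨ Aᶜ ∈ L) : MaxLinked L := by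
  refine ⟨hL, fun L' hL' hLL' => (Subset.antisymm ?_ hLL')⟩
  intro A hA
  refine (hcompl A).resolve_right fun hAc => ?_
  obtain ⟨x, hxA, hxAc⟩ := hL' A hA _ (hLL' hAc)
  exact hxAc hxA

theorem preimage {Y : Type*} [Nonempty X] (hL : MaxLinked L) (f : X → Y) :
    MaxLinked {B : Set Y | f ⁻¹' B ∈ L} := by
  refine of_mem_or_compl_mem (fun B hB C hC => ?_) fun B => hL.mem_or_compl_mem (f ⁻¹' B)
  obtain ⟨x, hxB, hxC⟩ := hL.1 _ hB _ hC
  exact ⟨f x, hxB, hxC⟩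

end MaxLinked

section Convolution

variable {G : Type*} [Group G]

theorem conv_assoc (A B C : Set (Set G)) : conv (conv A B) C = conv A (conv B C) := by
  ext S
  simp only [conv, mem_ofPred_eq, mul_assoc]

theorem MaxLinked.conv {A B : Set (Set G)} (hA : MaxLinked A) (hB : MaxLinked B) :
    MaxLinked (conv A B) := by
  refine .of_mem_or_compl_mem (fun S hS T hT => ?_) fun S => ?_
  · obtain ⟨x, hxS, hxT⟩ := hA.1 _ hS _ hT
    obtain ⟨z, hzS, hzT⟩ := hB.1 _ hxS _ hxT
    exact ⟨x * z, hzS, hzT⟩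
  · have hcompl : {x : G | {z | x * z ∈ Sᶜ} ∈ B} = {x | {z | x * z ∈ S} ∈ B}ᶜ :=
      ext fun x => hB.compl_mem_iff
    simpa only [_root_.conv, mem_ofPred_eq, hcompl] using hA.mem_or_compl_mem _

theorem preimage_mem_conv {K : Type*} [Group K] (f : G →* K) (A B : Set (Set G)) :
    {C : Set K | f ⁻¹' C ∈ conv A B}
      = conv {C : Set K | f ⁻¹' C ∈ A} {C : Set K | f ⁻¹' C ∈ B} := by
  ext C
  simp only [conv, mem_ofPred_eq, mem_preimage, map_mul]
  rfl

end Convolution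

/-- The semigroup `λ(G)` of maximal linked systems on `G` under `conv`. -/
@[ext]
structure MaxLinkedSystem (G : Type*) [Group G] where
  sets : Set (Set G)
  maxLinked : MaxLinked sets

namespace MaxLinkedSystem

variable {G : Type*} [Group G]

instance : Semigroup (MaxLinkedSystem G) where
  mul A B := ⟨conv A.sets B.sets, A.maxLinked.conv B.maxLinked⟩
  mul_assoc A B C := MaxLinkedSystem.ext (conv_assoc A.sets B.sets C.sets)

instance [Finite G] : Finite (MaxLinkedSystem G) :=
  .of_injective sets fun _ _ => MaxLinkedSystem.ext

@[simp]
theorem sets_mul (A B : MaxLinkedSystem G) : (A * B).sets = conv A.sets B.sets := rfl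

/-- `λf`, the map induced on maximal linked systems by a homomorphism `f`. -/
def map {K : Type*} [Group K] (f : G →* K) : MaxLinkedSystem G →ₙ* MaxLinkedSystem K where
  toFun L := ⟨{B | f ⁻¹' B ∈ L.sets}, L.maxLinked.preimage f⟩
  map_mul' A B := MaxLinkedSystem.ext (preimage_mem_conv f A.sets B.sets)

@[simp]
theorem sets_map {K : Type*} [Group K] (f : G →* K) (L : MaxLinkedSystem G) :
    (map f L).sets = {B | f ⁻¹' B ∈ L.sets} := rfl

end MaxLinkedSystem

section LeftIdeal

variable {M : Type*}

def IsLeftIdeal [Mul M] (I : Set M) : Prop :=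
  I.Nonempty ∧ ∀ a, ∀ b ∈ I, a * b ∈ I

variable [Semigroup M]

theorem isLeftIdeal_range_mul_right (s : M) : IsLeftIdeal (range (· * s)) :=
  ⟨⟨s * s, s, rfl⟩, by rintro a _ ⟨b, rfl⟩; exact ⟨a * b, mul_assoc a b s⟩⟩

theorem exists_mul_self_eq_of_finite [Finite M] {s : Set M} (hs : s.Nonempty)
    (hmul : ∀ x ∈ s, ∀ y ∈ s, x * y ∈ s) : ∃ e ∈ s, e * e = e := by
  let _ : TopologicalSpace M := ⊥
  have : DiscreteTopology M := ⟨rfl⟩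
  exact exists_idempotent_in_compact_subsemigroup (fun _ => continuous_of_discreteTopology) s hs
    s.toFinite.isCompact hmul

theorem mul_eq_self_of_minimal_isLeftIdeal {I : Set M} (hI : Minimal IsLeftIdeal I) {e q : M}
    (he : e ∈ I) (hee : e * e = e) (hq : q ∈ I) : q * e = q := by
  have hIe : range (· * e) = I :=
    hI.eq_of_subset (isLeftIdeal_range_mul_right e) (by rintro _ ⟨a, rfl⟩; exact hI.1.2 a e he)
  obtain ⟨a, rfl⟩ := hIe ▸ hq
  simp only [mul_assoc, hee]

theorem exists_mem_forall_mul_mul_eq [Finite M] {I J : Set M} (hI : Minimal IsLeftIdeal I)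
    (hJ : IsLeftIdeal J) : ∃ u ∈ J, ∃ e, ∀ q ∈ I, q * u * e = q := by
  obtain ⟨e, heI, hee⟩ := exists_mul_self_eq_of_finite hI.1.1 fun x _ y hy => hI.1.2 x y hy
  obtain ⟨j, hj⟩ := hJ.1
  obtain ⟨u, ⟨huJ, heu⟩, huu⟩ := exists_mul_self_eq_of_finite (s := {y ∈ J | e * y = y})
    ⟨e * j, hJ.2 e j hj, by rw [← mul_assoc, hee]⟩
    fun x ⟨_, hx⟩ y ⟨hyJ, _⟩ => ⟨hJ.2 x y hyJ, by rw [← mul_assoc, hx]⟩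
  have hue : u * e * (u * e) = u * e := by
    rw [mul_assoc, ← mul_assoc e, heu, ← mul_assoc, huu]
  exact ⟨u, huJ, e, fun q hq => by
    rw [mul_assoc, mul_eq_self_of_minimal_isLeftIdeal hI (hI.1.2 u e heI) hue hq]⟩

theorem MulHom.injOn_of_minimal_isLeftIdeal [Finite M] {N : Type*} [Mul N] (f : M →ₙ* N)
    {I J : Set M} (hJ : IsLeftIdeal J) (hf : InjOn f J) (hI : Minimal IsLeftIdeal I) :
    InjOn f I := by
  obtain ⟨u, huJ, e, hue⟩ := exists_mem_forall_mul_mul_eq hI hJ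
  intro q₁ hq₁ q₂ hq₂ hq
  have hqu : q₁ * u = q₂ * u := hf (hJ.2 q₁ u huJ) (hJ.2 q₂ u huJ) (by simp only [map_mul, hq])
  rw [← hue q₁ hq₁, ← hue q₂ hq₂, hqu]

end LeftIdeal

theorem odd_card_of_forall_odd_orderOf {K : Type*} [Group K] [Finite K]
    (hK : ∀ g : K, Odd (orderOf g)) : Odd (Nat.card K) := by
  by_contra hodd
  have : Fact (Nat.Prime 2) := ⟨Nat.prime_two⟩
  obtain ⟨g, hg⟩ := exists_prime_orderOf_dvd_card' (G := K) 2
    (Nat.not_odd_iff_even.1 hodd).two_dvd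
  have := hK g
  rw [hg] at this
  exact Nat.not_odd_iff_even.2 even_two this

section Majority

variable {G : Type*} [Group G] (H : Subgroup G)

def majority : Set (Set G) := {S | Nat.card H < 2 * (S ∩ H).ncard}

theorem maxLinked_majority [Finite H] (hH : Odd (Nat.card H)) : MaxLinked (majority H) := by
  have hHfin : (H : Set G).Finite := Set.toFinite (H : Set G)
  have hcard : Nat.card H = (H : Set G).ncard := Nat.card_coe_set_eq _
  refine .of_mem_or_compl_mem (fun S hS T hT => ?_) fun S => ?_
  · have hunion : (S ∩ H ∪ T ∩ H).ncard ≤ (H : Set G).ncard :=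
      ncard_le_ncard (union_subset inter_subset_right inter_subset_right) hHfin
    have hinter := ncard_inter_add_ncard_union (S ∩ H) (T ∩ H) (hHfin.inter_of_right S)
      (hHfin.inter_of_right T)
    have hS : Nat.card H < 2 * (S ∩ H).ncard := hS
    have hT : Nat.card H < 2 * (T ∩ H).ncard := hT
    obtain ⟨x, ⟨hxS, -⟩, hxT, -⟩ := nonempty_of_ncard_ne_zero (s := S ∩ H ∩ (T ∩ H)) (by omega)
    exact ⟨x, hxS, hxT⟩
  · have hsplit := ncard_inter_add_ncard_sdiff_eq_ncard (H : Set G) S hHfin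
    simp only [majority, mem_ofPred_eq, inter_comm _ (H : Set G), ← Set.sdiff_eq]
    -- `|H|` is odd, so `S ∩ H` and `H \ S` cannot tie
    obtain ⟨k, hk⟩ := hH
    omega

theorem ncard_preimage_mul_left_inter (S : Set G) (x : G) :
    ({z | x * z ∈ S} ∩ H).ncard = (S ∩ QuotientGroup.mk ⁻¹' {(x : G ⧸ H)}).ncard := by
  have himage : (x * ·) '' ({z | x * z ∈ S} ∩ H) = S ∩ QuotientGroup.mk ⁻¹' {(x : G ⧸ H)} := by
    ext y
    simp only [mem_image, mem_inter_iff, mem_ofPred_eq, mem_preimage, mem_singleton_iff,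
      QuotientGroup.eq, SetLike.mem_coe]
    refine ⟨fun ⟨z, ⟨hzS, hzH⟩, hy⟩ => hy ▸ ⟨hzS, by simpa using hzH⟩, fun ⟨hyS, hy⟩ => ?_⟩
    exact ⟨x⁻¹ * y, ⟨by simpa using hyS, by simpa using H.inv_mem hy⟩, by group⟩
  rw [← himage, ncard_image_of_injective _ (mul_right_injective x)]

def cosetMajority (S : Set G) : Set (G ⧸ H) :=
  {c | Nat.card H < 2 * (S ∩ QuotientGroup.mk ⁻¹' {c}).ncard}

theorem mem_conv_majority_iff (L : Set (Set G)) (S : Set G) :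
    S ∈ conv L (majority H) ↔ QuotientGroup.mk ⁻¹' cosetMajority H S ∈ L := by
  have hset : {x | {z | x * z ∈ S} ∈ majority H} = QuotientGroup.mk ⁻¹' cosetMajority H S := by
    ext x
    simp only [majority, cosetMajority, mem_ofPred_eq, mem_preimage,
      ncard_preimage_mul_left_inter]
  exact iff_of_eq (congrArg (· ∈ L) hset)

theorem cosetMajority_preimage [Finite H] (C : Set (G ⧸ H)) :
    cosetMajority H (QuotientGroup.mk ⁻¹' C) = C := by
  ext c
  obtain ⟨x, rfl⟩ := QuotientGroup.mk_surjective c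
  have hcoset := ncard_preimage_mul_left_inter H univ x
  simp only [mem_univ, ofPred_true, univ_inter] at hcoset
  by_cases hx : (x : G ⧸ H) ∈ C
  · have : QuotientGroup.mk ⁻¹' C ∩ QuotientGroup.mk ⁻¹' {(x : G ⧸ H)} =
        QuotientGroup.mk ⁻¹' {(x : G ⧸ H)} :=
      inter_eq_right.2 (preimage_mono (singleton_subset_iff.2 hx))
    simp only [cosetMajority, mem_ofPred_eq, this, ← hcoset, hx, iff_true]
    have hpos : 0 < Nat.card H := Nat.card_pos
    have hcard : Nat.card H = (H : Set G).ncard := Nat.card_coe_set_eq _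
    omega
  · have : QuotientGroup.mk ⁻¹' C ∩ QuotientGroup.mk ⁻¹' {(x : G ⧸ H)} = (∅ : Set G) := by
      rw [← preimage_inter, inter_singleton_eq_empty.2 hx, preimage_empty]
    simp [cosetMajority, this, hx]

variable [H.Normal]

def majoritySystem [Finite H] (hH : Odd (Nat.card H)) : MaxLinkedSystem G :=
  ⟨majority H, maxLinked_majority H hH⟩

theorem map_mk_mul_majoritySystem [Finite H] (hH : Odd (Nat.card H)) (L : MaxLinkedSystem G) :
    MaxLinkedSystem.map (QuotientGroup.mk' H) (L * majoritySystem H hH) =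
      MaxLinkedSystem.map (QuotientGroup.mk' H) L := by
  ext C
  simp only [MaxLinkedSystem.sets_map, MaxLinkedSystem.sets_mul, mem_ofPred_eq,
    QuotientGroup.coe_mk', majoritySystem, mem_conv_majority_iff, cosetMajority_preimage]

theorem injOn_map_mk_range_mul_majoritySystem [Finite H] (hH : Odd (Nat.card H)) :
    InjOn (MaxLinkedSystem.map (QuotientGroup.mk' H))
      (range (· * majoritySystem H hH)) := by
  rintro _ ⟨L₁, rfl⟩ _ ⟨L₂, rfl⟩ hL
  simp only [map_mk_mul_majoritySystem] at hL
  ext S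
  simp only [MaxLinkedSystem.sets_mul, majoritySystem, mem_conv_majority_iff]
  exact iff_of_eq (congrArg (cosetMajority H S ∈ ·.sets) hL)

end Majority

theorem minimal_isLeftIdeal_preimage_sets {G : Type*} [Group G] {I : Set (Set (Set G))}
    (hI : IsMinimalLeftIdealLam I) :
    Minimal IsLeftIdeal (MaxLinkedSystem.sets ⁻¹' I) := by
  obtain ⟨⟨⟨L, hL⟩, hImax, hImul⟩, hImin⟩ := hI
  refine ⟨⟨⟨⟨L, hImax L hL⟩, hL⟩, fun A B hB => hImul A.sets A.maxLinked B.sets hB⟩,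
    fun J hJ hJI => ?_⟩
  have hJlam : IsLeftIdealLam (MaxLinkedSystem.sets '' J) := by
    refine ⟨hJ.1.image _, fun _ ⟨B, _, hB⟩ => hB ▸ B.maxLinked, ?_⟩
    rintro A hA _ ⟨B, hB, rfl⟩
    exact ⟨⟨A, hA⟩ * B, hJ.2 _ B hB, rfl⟩
  rw [← hImin _ hJlam (image_subset_iff.2 hJI),
    preimage_image_eq J fun _ _ => MaxLinkedSystem.ext]

theorem lam_pi_injOn_minimal_left_ideals {G : Type*} [Group G] [Fintype G]
    (H : Subgroup G) [H.Normal] (hodd : ∀ h ∈ H, Odd (orderOf h)) :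
    ∀ I : Set (Set (Set G)), IsMinimalLeftIdealLam I →
      Set.InjOn (fun L : Set (Set G) => {B : Set (G ⧸ H) | QuotientGroup.mk ⁻¹' B ∈ L}) I := by
  intro I hI L₁ hL₁ L₂ hL₂ hL
  have hH : Odd (Nat.card H) :=
    odd_card_of_forall_odd_orderOf fun h => Subgroup.orderOf_coe h ▸ hodd h h.2
  have hinj := (MaxLinkedSystem.map (QuotientGroup.mk' H)).injOn_of_minimal_isLeftIdeal
    (isLeftIdeal_range_mul_right _) (injOn_map_mk_range_mul_majoritySystem H hH)
    (minimal_isLeftIdeal_preimage_sets hI)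
  exact congrArg MaxLinkedSystem.sets <| hinj (x₁ := ⟨L₁, hI.1.2.1 L₁ hL₁⟩) hL₁
    (x₂ := ⟨L₂, hI.1.2.1 L₂ hL₂⟩) hL₂ (MaxLinkedSystem.ext hL)
end
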